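/- Let L be an isotropic subspace of W with respect to ω ∈ Λ^{n+1} W* and suppose ker ω ⊆ L. Then dim L = dim ker ω + C(N+n, n) (with N+n = dim W − dim L) if and only if ω^♭(L) = Λⁿ L^⊥. In that case L is maximal isotropic with respect to ω. -/

import Mathlib

open Module Function

variable {K : Type*} [Field K] {W : Type*} [AddCommGroup W] [Module K W]

/-- The wedge product `α 0 ∧ ⋯ ∧ α (n-1)` of `n` linear forms, as an alternating `n`-form. -/
noncomputable def detForm (n : ℕ) (α : Fin n → Module.Dual K W) : W [⋀^Fin n]→ₗ[K] K :=
  (Matrix.detRowAlternating (R := K) (n := Fin n)).compLinearMap (LinearMap.pi α)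

/-- The kernel of an alternating form under interior contraction:
`v ∈ kerForm β ↔ i_v β = 0`. -/
def kerForm {n : ℕ} (β : W [⋀^Fin n]→ₗ[K] K) : Submodule K W where
  carrier := {v | ∀ w : Fin n → W, (∃ i, w i = v) → β w = 0}
  zero_mem' := by
    rintro w ⟨i, hi⟩
    have h : w = Function.update w i (0 : W) := by rw [← hi, Function.update_eq_self]
    rw [h]
    simp
  add_mem' := by
    rintro a b ha hb w ⟨i, hi⟩
    have h : w = Function.update w i (a + b) := by rw [← hi, Function.update_eq_self]
    rw [h, β.map_update_add]
    rw [ha _ ⟨i, by simp⟩, hb _ ⟨i, by simp⟩, add_zero]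
  smul_mem' := by
    rintro c a ha w ⟨i, hi⟩
    have h : w = Function.update w i (c • a) := by rw [← hi, Function.update_eq_self]
    rw [h, β.map_update_smul, ha _ ⟨i, by simp⟩, smul_zero]

/-- The support of an alternating `n`-form `β`: the smallest subspace `S ⊆ W*` such that
`β ∈ Λⁿ S` (equivalently, `β` is a linear combination of wedges of elements of `S`). -/
noncomputable def supp {n : ℕ} (β : W [⋀^Fin n]→ₗ[K] K) : Submodule K (Module.Dual K W) :=
  sInf {S | β ∈ Submodule.span K
    {γ | ∃ α : Fin n → Module.Dual K W, (∀ i, α i ∈ S) ∧ γ = detForm n α}}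

/-- `L` is `k`-isotropic w.r.t. `ω`: every contraction of `ω` with `k+1` vectors of `L`
vanishes. -/
def kIsotropic {n : ℕ} (ω : W [⋀^Fin n]→ₗ[K] K) (k : ℕ) (L : Submodule K W) : Prop :=
  ∀ v : Fin n → W, (∀ i : Fin n, (i : ℕ) ≤ k → v i ∈ L) → ω v = 0

/-- `L` is maximal (1-)isotropic w.r.t. `ω`. -/
def MaximalIsotropic {n : ℕ} (ω : W [⋀^Fin n]→ₗ[K] K) (L : Submodule K W) : Prop :=
  kIsotropic ω 1 L ∧ ∀ L' : Submodule K W, kIsotropic ω 1 L' → L ≤ L' → L' = L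

/-- `v` is a decomposable vector w.r.t. the `(n+1)`-form `ω`, i.e. `i_v ω` is a
decomposable `n`-form. -/
def DecompVec {n : ℕ} (ω : W [⋀^Fin (n + 1)]→ₗ[K] K) (v : W) : Prop :=
  ∃ α : Fin n → Module.Dual K W, ω.curryLeft v = detForm n α

/-- `L` is decomposable w.r.t. `ω`: it has a basis of decomposable vectors. -/
def DecompSub {n : ℕ} (ω : W [⋀^Fin (n + 1)]→ₗ[K] K) (L : Submodule K W) : Prop :=
  ∃ (m : ℕ) (b : Fin m → W), (∀ i, b i ∈ L) ∧ LinearIndependent K b ∧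
    Submodule.span K (Set.range b) = L ∧ ∀ i, DecompVec ω (b i)

/-- `Λⁿ L^⊥` inside the space of alternating `n`-forms: the span of wedges of `n` elements
of the annihilator of `L`. -/
noncomputable def lambdaAnn (n : ℕ) (L : Submodule K W) :
    Submodule K (W [⋀^Fin n]→ₗ[K] K) :=
  Submodule.span K
    {β | ∃ α : Fin n → Module.Dual K W, (∀ i, α i ∈ L.dualAnnihilator) ∧ β = detForm n α}

/-! ### Auxiliary material -/

section Stmt17Aux

variable {n : ℕ}

theorem detForm_apply (α : Fin n → Module.Dual K W) (v : Fin n → W) :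
    detForm n α v = Matrix.det (Matrix.of fun i j => α j (v i)) := rfl

/-- Evaluation of alternating forms at a fixed tuple, as a linear map. -/
def evalAt (x : Fin n → W) : (W [⋀^Fin n]→ₗ[K] K) →ₗ[K] K where
  toFun β := β x
  map_add' _ _ := rfl
  map_smul' _ _ := rfl

instance altMapFiniteDimensional [FiniteDimensional K W] :
    FiniteDimensional K (W [⋀^Fin n]→ₗ[K] K) := by
  let emb : (W [⋀^Fin n]→ₗ[K] K) →ₗ[K] MultilinearMap K (fun _ : Fin n => W) K :=
    { toFun := fun f => f.toMultilinearMap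
      map_add' := fun _ _ => rfl
      map_smul' := fun _ _ => rfl }
  exact FiniteDimensional.of_injective emb AlternatingMap.coe_multilinearMap_injective

@[simp] theorem evalAt_apply (x : Fin n → W) (β : W [⋀^Fin n]→ₗ[K] K) :
    evalAt x β = β x := rfl

theorem detForm_comp_perm (α : Fin n → Module.Dual K W) (σ : Equiv.Perm (Fin n)) :
    detForm n (α ∘ σ) = Equiv.Perm.sign σ • detForm n α := by
  ext v
  rw [AlternatingMap.smul_apply, detForm_apply, detForm_apply]
  have h : (Matrix.of fun i j => (α ∘ σ) j (v i)) =
      (Matrix.of fun i j => α j (v i)).submatrix id σ := by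
    ext i j; rfl
  rw [h, Matrix.det_permute', Units.smul_def, zsmul_eq_mul]

theorem detForm_eq_zero_of_eq (α : Fin n → Module.Dual K W) {i j : Fin n} (hij : i ≠ j)
    (h : α i = α j) : detForm n α = 0 := by
  ext v
  rw [detForm_apply, AlternatingMap.zero_apply]
  exact Matrix.det_zero_of_column_eq hij (fun k => by simp [h])

/-- `detForm` as a multilinear map in the linear forms. -/
noncomputable def detFormML (n : ℕ) :
    MultilinearMap K (fun _ : Fin n => Module.Dual K W) (W [⋀^Fin n]→ₗ[K] K) where
  toFun := detForm n
  map_update_add' := by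
    intro dec α i x y
    have hdec : dec = instDecidableEqFin n := Subsingleton.elim _ _
    subst hdec
    have key : ∀ z : Module.Dual K W, ∀ v : Fin n → W,
        (Matrix.of fun i' j => (Function.update α i z) j (v i')) =
          Matrix.updateCol (Matrix.of fun i' j => α j (v i')) i (fun r => z (v r)) := by
      intro z v; ext r c
      simp only [Matrix.of_apply, Matrix.updateCol_apply]
      by_cases hc : c = i <;> simp [hc, Function.update_apply]
    ext v
    simp only [AlternatingMap.add_apply, detForm_apply, key]
    have : (fun r => (x + y) (v r)) = (fun r => x (v r)) + fun r => y (v r) := rfl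
    rw [this, Matrix.det_updateCol_add]
  map_update_smul' := by
    intro dec α i c x
    have hdec : dec = instDecidableEqFin n := Subsingleton.elim _ _
    subst hdec
    have key : ∀ z : Module.Dual K W, ∀ v : Fin n → W,
        (Matrix.of fun i' j => (Function.update α i z) j (v i')) =
          Matrix.updateCol (Matrix.of fun i' j => α j (v i')) i (fun r => z (v r)) := by
      intro z v; ext r c
      simp only [Matrix.of_apply, Matrix.updateCol_apply]
      by_cases hc : c = i <;> simp [hc, Function.update_apply]
    ext v
    simp only [AlternatingMap.smul_apply, detForm_apply, key]
    have : (fun r => (c • x) (v r)) = c • fun r => x (v r) := rfl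
    rw [this, Matrix.det_updateCol_smul]
    simp

@[simp] theorem detFormML_apply (α : Fin n → Module.Dual K W) :
    detFormML (K := K) (W := W) n α = detForm n α := rfl

/-- The subspace of alternating `n`-forms killed by contraction with any vector of `L`. -/
def killedBy (n : ℕ) (L : Submodule K W) : Submodule K (W [⋀^Fin n]→ₗ[K] K) where
  carrier := {β | ∀ w : Fin n → W, (∃ i, w i ∈ L) → β w = 0}
  zero_mem' := fun _ _ => rfl
  add_mem' := by
    intro a b ha hb w hw
    rw [AlternatingMap.add_apply, ha w hw, hb w hw, add_zero]
  smul_mem' := by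
    intro c a ha w hw
    rw [AlternatingMap.smul_apply, ha w hw, smul_zero]

theorem mem_killedBy {L : Submodule K W} {β : W [⋀^Fin n]→ₗ[K] K} :
    β ∈ killedBy n L ↔ ∀ w : Fin n → W, (∃ i, w i ∈ L) → β w = 0 := Iff.rfl

theorem lambdaAnn_le_killedBy (L : Submodule K W) :
    lambdaAnn (K := K) n L ≤ killedBy n L := by
  rw [lambdaAnn, Submodule.span_le]
  rintro β ⟨α, hα, rfl⟩
  rw [SetLike.mem_coe, mem_killedBy]
  rintro w ⟨i, hwi⟩
  rw [detForm_apply]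
  exact Matrix.det_eq_zero_of_row_eq_zero i
    (fun j => (Submodule.mem_dualAnnihilator _).mp (hα j) _ hwi)

theorem zunits_smul_mem {M : Type*} [AddCommGroup M] [Module K M] {p : Submodule K M}
    {x : M} (z : ℤˣ) (h : x ∈ p) : z • x ∈ p := by
  rcases Int.units_eq_one_or z with hz | hz <;> subst hz <;>
    simp [Units.smul_def, h, p.neg_mem h]

theorem zunits_smul_eq_zero {M : Type*} [AddCommGroup M] {x : M} (z : ℤˣ)
    (h : z • x = 0) : x = 0 := by
  rcases Int.units_eq_one_or z with hz | hz <;> subst hz <;>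
    simpa [Units.smul_def, neg_eq_zero] using h

theorem exists_perm_factor {m : ℕ} {t : Fin n → Fin m} (ht : Function.Injective t) :
    ∃ (s : Finset (Fin m)) (hs : s.card = n) (σ : Equiv.Perm (Fin n)),
      ∀ i, (s.orderIsoOfFin hs (σ i) : Fin m) = t i := by
  classical
  have hcard : (Finset.image t Finset.univ).card = n := by
    rw [Finset.card_image_of_injective _ ht, Finset.card_univ, Fintype.card_fin]
  set s := Finset.image t Finset.univ with hs_def
  have hmem : ∀ i, t i ∈ s := fun i => Finset.mem_image_of_mem _ (Finset.mem_univ i)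
  set e := s.orderIsoOfFin hcard with he_def
  set σ' : Fin n → Fin n := fun i => e.symm ⟨t i, hmem i⟩ with hσ'_def
  have hσ' : Function.Injective σ' := by
    intro i j hij
    apply ht
    have := congrArg (fun k => ((e k : s) : Fin m)) hij
    simpa [σ'] using this
  refine ⟨s, hcard, Equiv.ofBijective σ' (Finite.injective_iff_bijective.mp hσ'), fun i => ?_⟩
  show ((e (σ' i) : s) : Fin m) = t i
  simp [σ']

theorem detForm_delta {m : ℕ} (bv : Fin m → Module.Dual K W) (w : Fin m → W)
    (hbw : ∀ i j, bv i (w j) = if i = j then (1 : K) else 0)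
    (s t : Finset (Fin m)) (hs : s.card = n) (ht : t.card = n) :
    detForm n (fun i => bv (s.orderIsoOfFin hs i)) (fun i => w (t.orderIsoOfFin ht i))
      = if s = t then 1 else 0 := by
  rw [detForm_apply]
  by_cases hst : s = t
  · subst hst
    rw [if_pos rfl]
    have hmat : (Matrix.of fun i j =>
        bv (s.orderIsoOfFin hs j) (w (s.orderIsoOfFin hs i))) =
        (1 : Matrix (Fin n) (Fin n) K) := by
      ext i j
      rw [Matrix.of_apply, hbw, Matrix.one_apply]
      by_cases h : i = j
      · simp [h]
      · rw [if_neg, if_neg h]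
        intro hc
        exact h (((s.orderIsoOfFin hs).injective (Subtype.ext hc)).symm)
    rw [hmat, Matrix.det_one]
  · rw [if_neg hst]
    have hex : ∃ x ∈ t, x ∉ s := by
      by_contra hc
      push_neg at hc
      exact hst (Finset.eq_of_subset_of_card_le hc (by omega)).symm
    obtain ⟨x, hxt, hxs⟩ := hex
    obtain ⟨i0, hi0⟩ : ∃ i0, (t.orderIsoOfFin ht i0 : Fin m) = x :=
      ⟨(t.orderIsoOfFin ht).symm ⟨x, hxt⟩, by simp⟩
    apply Matrix.det_eq_zero_of_row_eq_zero i0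
    intro j
    rw [Matrix.of_apply, hbw, if_neg]
    intro hc
    have hmem := (s.orderIsoOfFin hs j).2
    rw [hc, hi0] at hmem
    exact hxs hmem

theorem exists_dual_family [FiniteDimensional K W] {m : ℕ}
    {S : Submodule K (Module.Dual K W)} (b : Basis (Fin m) K S) :
    ∃ w : Fin m → W, ∀ i j, (b i : Module.Dual K W) (w j) = if i = j then (1 : K) else 0 := by
  have hs : Function.Surjective
      (S.dualRestrict ∘ₗ (Module.evalEquiv K W).toLinearMap) :=
    (Subspace.dualRestrict_surjective (W := S)).comp (Module.evalEquiv K W).surjective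
  choose w hw using fun j => hs (b.coord j)
  refine ⟨w, fun i j => ?_⟩
  have h1 := congrArg (fun φ => φ (b i)) (hw j)
  simp only [LinearMap.coe_comp, Function.comp_apply, Submodule.dualRestrict_apply,
    Basis.coord_apply, Basis.repr_self] at h1
  rw [Module.evalEquiv_toLinearMap] at h1
  simpa [Module.Dual.eval_apply, Finsupp.single_apply, eq_comm] using h1

theorem entry_zero {m : ℕ} (β : W [⋀^Fin (m + 1)]→ₗ[K] K) (w : Fin (m + 1) → W)
    (i : Fin (m + 1)) (h : ∀ u : Fin m → W, β (Matrix.vecCons (w i) u) = 0) : β w = 0 := by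
  classical
  rcases eq_or_ne (0 : Fin (m + 1)) i with hi | hi
  · have h1 : w = Matrix.vecCons (w i) (Matrix.vecTail w) := by
      rw [← hi]
      exact (Matrix.cons_head_tail w).symm
    rw [h1]; exact h _
  · have h2 : β (w ∘ Equiv.swap 0 i) = -β w := β.map_swap w hi
    have h3 : β (w ∘ Equiv.swap 0 i) = 0 := by
      have h4 : (w ∘ Equiv.swap 0 i) = Matrix.vecCons (w i)
          (Matrix.vecTail (w ∘ Equiv.swap 0 i)) := by
        have h5 : (w ∘ Equiv.swap 0 i) 0 = w i := by
          simp [Function.comp_apply, Equiv.swap_apply_left]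
        conv_lhs => rw [← Matrix.cons_head_tail (w ∘ Equiv.swap 0 i)]
        rw [show Matrix.vecHead (w ∘ Equiv.swap 0 i) = w i from h5]
      rw [h4]; exact h _
    rw [h3] at h2
    exact neg_eq_zero.mp h2.symm

theorem curry_mem_killedBy {n : ℕ} {ω : W [⋀^Fin (n + 1)]→ₗ[K] K} {L M : Submodule K W}
    (hLM : L ≤ M) (hiso : kIsotropic ω 1 M) {v : W} (hv : v ∈ M) :
    ω.curryLeft v ∈ killedBy n L := by
  rw [mem_killedBy]
  rintro w ⟨i, hwi⟩
  cases n with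
  | zero => exact i.elim0
  | succ m =>
    apply entry_zero (ω.curryLeft v) w i
    intro u
    rw [AlternatingMap.curryLeft_apply_apply]
    apply hiso
    intro j hj
    have hj01 : j = 0 ∨ j = 1 := by
      rcases Nat.le_one_iff_eq_zero_or_eq_one.mp hj with h | h
      · exact Or.inl (Fin.ext h)
      · exact Or.inr (Fin.ext h)
    rcases hj01 with rfl | rfl
    · simpa using hv
    · simpa [Matrix.cons_val_one, Matrix.vecHead] using hLM hwi

theorem kerForm_eq_ker_curryLeft {n : ℕ} (ω : W [⋀^Fin (n + 1)]→ₗ[K] K) :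
    kerForm ω = LinearMap.ker ω.curryLeft := by
  ext v
  constructor
  · intro hv
    rw [LinearMap.mem_ker]
    ext u
    rw [AlternatingMap.curryLeft_apply_apply, AlternatingMap.zero_apply]
    exact hv (Matrix.vecCons v u) ⟨0, rfl⟩
  · intro hv
    rintro w ⟨i, hwi⟩
    apply entry_zero ω w i
    intro u
    rw [hwi]
    have := congrArg (fun β : W [⋀^Fin n]→ₗ[K] K => β u) (LinearMap.mem_ker.mp hv)
    simpa using this

/-- The key dimension/equality facts about `Λⁿ L^⊥`. -/
theorem lambdaAnn_spec [FiniteDimensional K W] (n : ℕ) (L : Submodule K W) :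
    finrank K (lambdaAnn (K := K) n L) = (finrank K W - finrank K L).choose n ∧
      lambdaAnn (K := K) n L = killedBy n L := by
  classical
  set S := L.dualAnnihilator with hS
  set m := finrank K S with hm
  have hmr : m = finrank K W - finrank K L := by
    have h1 : finrank K (W ⧸ L) + finrank K L = finrank K W :=
      Submodule.finrank_quotient_add_finrank L
    have h2 : finrank K (W ⧸ L) = m := (Subspace.quotEquivAnnihilator L).finrank_eq
    omega
  haveI : Module.Finite K S := inferInstance
  haveI : Module.Free K S := Module.Free.of_divisionRing K S
  set b : Basis (Fin m) K S := finBasis K S with hb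
  obtain ⟨w, hw⟩ := exists_dual_family b
  set bv : Fin m → Module.Dual K W := fun i => (b i : Module.Dual K W) with hbv
  set Fam : {s : Finset (Fin m) // s.card = n} → (W [⋀^Fin n]→ₗ[K] K) :=
    fun s => detForm n (fun i => bv (s.1.orderIsoOfFin s.2 i)) with hFam
  have hFam_mem : ∀ s, Fam s ∈ lambdaAnn (K := K) n L := fun s =>
    Submodule.subset_span ⟨_, fun i => (b _).2, rfl⟩
  have hFam_indep : LinearIndependent K Fam := by
    rw [Fintype.linearIndependent_iff]
    intro g hg s'
    have h1 := congrArg (evalAt (fun i => w (s'.1.orderIsoOfFin s'.2 i))) hg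
    rw [map_sum, map_zero] at h1
    simp only [map_smul, evalAt_apply, hFam, smul_eq_mul] at h1
    rw [Finset.sum_eq_single s'] at h1
    · rw [detForm_delta bv w hw _ _ _ _, if_pos rfl, mul_one] at h1
      exact h1
    · intro s _ hss'
      rw [detForm_delta bv w hw _ _ _ _, if_neg, mul_zero]
      exact fun hc => hss' (Subtype.ext hc)
    · intro hs'; exact absurd (Finset.mem_univ s') hs'
  have hspan : Submodule.span K (Set.range Fam) = lambdaAnn (K := K) n L := by
    apply le_antisymm
    · rw [Submodule.span_le]
      rintro _ ⟨s, rfl⟩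
      exact hFam_mem s
    · rw [lambdaAnn, Submodule.span_le]
      rintro β ⟨α, hα, rfl⟩
      have hαi : ∀ i, α i = ∑ j, (b.repr ⟨α i, hα i⟩ j) • bv j := by
        intro i
        have h2 := congrArg S.subtype (b.sum_repr ⟨α i, hα i⟩)
        rw [map_sum] at h2
        simp only [map_smul, Submodule.subtype_apply] at h2
        exact h2.symm
      have hdet : detForm n α =
          detFormML (K := K) (W := W) n (fun i => ∑ j, (b.repr ⟨α i, hα i⟩ j) • bv j) := by
        rw [detFormML_apply]
        congr 1
        funext i
        exact hαi i
      rw [SetLike.mem_coe, hdet, MultilinearMap.map_sum]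
      apply Submodule.sum_mem
      intro r _
      rw [MultilinearMap.map_smul_univ]
      apply Submodule.smul_mem
      by_cases hr : Function.Injective r
      · obtain ⟨s, hs, σ, hσ⟩ := exists_perm_factor hr
        have hcomp : (fun i => bv (r i)) = (fun i => bv (s.orderIsoOfFin hs i)) ∘ σ := by
          funext i
          simp only [Function.comp_apply, hσ i]
        rw [detFormML_apply, hcomp, detForm_comp_perm]
        exact zunits_smul_mem _ (Submodule.subset_span ⟨⟨s, hs⟩, rfl⟩)
      · simp only [Function.Injective, not_forall] at hr
        obtain ⟨i, j, h1, h2⟩ := hr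
        rw [detFormML_apply, detForm_eq_zero_of_eq _ h2 (by rw [h1])]
        exact Submodule.zero_mem _
  have hcardI : Fintype.card {s : Finset (Fin m) // s.card = n} = m.choose n := by
    rw [Fintype.card_finset_len, Fintype.card_fin]
  have hfr : finrank K (lambdaAnn (K := K) n L) = m.choose n := by
    rw [← hspan, finrank_span_eq_card hFam_indep, hcardI]
  -- dimension bound for `killedBy`
  obtain ⟨Cp, hC⟩ := Submodule.exists_isCompl L
  set p := finrank K L with hp
  set r := finrank K Cp with hr
  have hrm : r = m := by
    have := Submodule.finrank_add_eq_of_isCompl hC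
    have hle : finrank K L ≤ finrank K W := Submodule.finrank_le L
    omega
  set bW : Basis (Fin p ⊕ Fin r) K W :=
    (Basis.prod (finBasis K L) (finBasis K Cp)).map (Submodule.prodEquivOfIsCompl L Cp hC)
    with hbW
  have hbL : ∀ i : Fin p, bW (Sum.inl i) ∈ L := by
    intro i
    rw [hbW, Basis.map_apply]
    have : (Basis.prod (finBasis K L) (finBasis K Cp)) (Sum.inl i) =
        ((finBasis K L i : L), (0 : Cp)) := by
      ext <;> simp [Basis.prod_apply]
    rw [this, Submodule.coe_prodEquivOfIsCompl']
    simp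
  set G : (killedBy n L : Submodule K (W [⋀^Fin n]→ₗ[K] K)) →ₗ[K]
      ({s : Finset (Fin r) // s.card = n} → K) :=
    LinearMap.pi (fun s =>
      evalAt (fun i => bW (Sum.inr (s.1.orderIsoOfFin s.2 i))) ∘ₗ (killedBy n L).subtype)
    with hG
  have hGinj : Function.Injective G := by
    refine (LinearMap.ker_eq_bot (R := K) (R₂ := K) (M := killedBy n L)
      (M₂ := {s : Finset (Fin r) // s.card = n} → K) (f := G)).mp ?_
    rw [eq_bot_iff]
    intro β hβ
    rw [LinearMap.mem_ker] at hβ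
    rw [Submodule.mem_bot]
    ext1
    rw [Submodule.coe_zero]
    apply Basis.ext_alternating bW
    intro v hv
    rw [AlternatingMap.zero_apply]
    by_cases hc : ∃ i k, v i = Sum.inl k
    · obtain ⟨i, k, hik⟩ := hc
      exact β.2 _ ⟨i, by rw [hik]; exact hbL k⟩
    · push_neg at hc
      have hvr : ∀ i, ∃ j, v i = Sum.inr j := by
        intro i
        cases hvi : v i with
        | inl k => exact absurd hvi (hc i k)
        | inr j => exact ⟨j, rfl⟩
      choose t ht using hvr
      have htinj : Function.Injective t := by
        intro a b hab
        apply hv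
        rw [ht a, ht b, hab]
      obtain ⟨s, hs, σ, hσ⟩ := exists_perm_factor htinj
      have h1 : (fun i => bW (v i)) =
          (fun i => bW (Sum.inr (s.orderIsoOfFin hs i))) ∘ σ := by
        funext i
        simp only [Function.comp_apply, hσ i, ht i]
      rw [h1, AlternatingMap.map_perm]
      have h0 : (β : W [⋀^Fin n]→ₗ[K] K)
          (fun i => bW (Sum.inr (s.orderIsoOfFin hs i))) = 0 := by
        have := congrFun hβ ⟨s, hs⟩
        simpa [hG] using this
      rw [h0, smul_zero]
  have hkb : finrank K (killedBy (K := K) n L) ≤ m.choose n := by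
    have h1 := LinearMap.finrank_le_finrank_of_injective hGinj
    rw [Module.finrank_pi, Fintype.card_finset_len, Fintype.card_fin, hrm] at h1
    exact h1
  have heq : lambdaAnn (K := K) n L = killedBy n L := by
    apply Submodule.eq_of_le_of_finrank_le (lambdaAnn_le_killedBy L)
    rw [hfr]
    exact hkb
  exact ⟨by rw [hfr, hmr], heq⟩

end Stmt17Aux

/-- for an isotropic `L` containing `ker ω`,
`dim L = dim ker ω + C(N+n, n)` iff `ω^♭(L) = Λⁿ L^⊥`; in that case `L` is maximal
isotropic. -/
theorem stmt17 [FiniteDimensional K W] {n : ℕ} (ω : W [⋀^Fin (n + 1)]→ₗ[K] K)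
    (L : Submodule K W) (hiso : kIsotropic ω 1 L) (hker : kerForm ω ≤ L) :
    (finrank K L = finrank K (kerForm ω) + (finrank K W - finrank K L).choose n ↔
        Submodule.map ω.curryLeft L = lambdaAnn n L) ∧
      (Submodule.map ω.curryLeft L = lambdaAnn n L → MaximalIsotropic ω L) := by
  classical
  obtain ⟨hdim, hkilled⟩ := lambdaAnn_spec n L
  have hkerEq : kerForm ω = LinearMap.ker ω.curryLeft := kerForm_eq_ker_curryLeft ω
  set g : L →ₗ[K] (W [⋀^Fin n]→ₗ[K] K) := ω.curryLeft ∘ₗ L.subtype with hg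
  have hrange : LinearMap.range g = Submodule.map ω.curryLeft L := by
    rw [hg, LinearMap.range_comp, Submodule.range_subtype]
  have hkerg : finrank K (LinearMap.ker g) = finrank K (kerForm ω) := by
    have h1 : LinearMap.ker g = Submodule.comap L.subtype (LinearMap.ker ω.curryLeft) := by
      rw [hg, LinearMap.ker_comp]
    rw [h1, ← hkerEq]
    exact (Submodule.comapSubtypeEquivOfLe hker).finrank_eq
  have hrn : finrank K (Submodule.map ω.curryLeft L) + finrank K (kerForm ω) = finrank K L := by
    rw [← hrange, ← hkerg]
    exact g.finrank_range_add_finrank_ker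
  have himg : Submodule.map ω.curryLeft L ≤ lambdaAnn n L := by
    rw [hkilled]
    rintro _ ⟨v, hv, rfl⟩
    exact curry_mem_killedBy le_rfl hiso hv
  refine ⟨⟨fun h => ?_, fun h => ?_⟩, fun h => ?_⟩
  · apply Submodule.eq_of_le_of_finrank_le himg
    rw [hdim]
    omega
  · have h2 : finrank K (Submodule.map ω.curryLeft L) =
        (finrank K W - finrank K L).choose n := by rw [h, hdim]
    omega
  · refine ⟨hiso, fun L' hiso' hLL' => ?_⟩
    apply le_antisymm ?_ hLL'
    intro v hv
    have hmem : ω.curryLeft v ∈ killedBy n L := curry_mem_killedBy hLL' hiso' hv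
    rw [← hkilled, ← h] at hmem
    obtain ⟨u, hu, huv⟩ := hmem
    have hsub : v - u ∈ kerForm ω := by
      rw [hkerEq, LinearMap.mem_ker, map_sub, huv, sub_self]
    have h3 := L.add_mem (hker hsub) hu
    simpa using h3
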